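/- arXiv:1812.07998 — 5 statements merged into one kernel-verified Lean document; each statement's English description precedes it below -/
import Mathlib

section
/- Let a, b satisfy a(1) = b(1) = 1, b(n) = 2ε₁·b(n-1) + 1, a(n) = (1-ε₂)·a(n-1) + ε₁·b(n-1) + 1 for n ≥ 2, with 0 ≤ ε₁ ≤ 1/2 and 0 ≤ ε₂ ≤ 1. Then a(n) ≤ (n-1)²/2 + n for all n ≥ 1; in particular the expected number of explored nodes with L integer variables, a(L+1), is at most L²/2 + L + 1 = O(L²). -/
theorem stmt_6 (ε₁ ε₂ : ℝ) (a b : ℕ → ℝ)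
    (hε₁0 : 0 ≤ ε₁) (hε₁h : ε₁ ≤ 1/2) (hε₂0 : 0 ≤ ε₂) (hε₂1 : ε₂ ≤ 1)
    (ha1 : a 1 = 1) (hb1 : b 1 = 1)
    (hbrec : ∀ n : ℕ, 2 ≤ n → b n = 2 * ε₁ * b (n - 1) + 1)
    (harec : ∀ n : ℕ, 2 ≤ n → a n = (1 - ε₂) * a (n - 1) + ε₁ * b (n - 1) + 1) :
    (∀ n : ℕ, 1 ≤ n → a n ≤ ((n : ℝ) - 1) ^ 2 / 2 + n) ∧
    (∀ L : ℕ, a (L + 1) ≤ (L : ℝ) ^ 2 / 2 + L + 1) := by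
  have hb : ∀ n : ℕ, 1 ≤ n → 0 ≤ b n ∧ b n ≤ (n : ℝ) := by
    intro n hn
    induction n, hn using Nat.le_induction with
    | base => simp [hb1]
    | succ n hn ih =>
      have h2 : 2 ≤ n + 1 := by omega
      have := hbrec (n + 1) h2
      simp only [Nat.add_sub_cancel] at this
      obtain ⟨ih1, ih2⟩ := ih
      constructor
      · rw [this]; positivity
      · rw [this]; push_cast; nlinarith
  have ha : ∀ n : ℕ, 1 ≤ n → 0 ≤ a n ∧ a n ≤ ((n : ℝ) - 1) ^ 2 / 2 + n := by
    intro n hn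
    induction n, hn using Nat.le_induction with
    | base => norm_num [ha1]
    | succ n hn ih =>
      have h2 : 2 ≤ n + 1 := by omega
      have hrec := harec (n + 1) h2
      simp only [Nat.add_sub_cancel] at hrec
      obtain ⟨ia1, ia2⟩ := ih
      obtain ⟨ib1, ib2⟩ := hb n hn
      have hn1 : (1 : ℝ) ≤ (n : ℝ) := by exact_mod_cast hn
      constructor
      · rw [hrec]; nlinarith
      · rw [hrec]; push_cast; nlinarith [mul_nonneg hε₂0 ia1]
  refine ⟨fun n hn => (ha n hn).2, fun L => ?_⟩
  have := (ha (L + 1) (by omega)).2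
  push_cast at this ⊢
  nlinarith [this]
end

section
/- Let a, b satisfy a(1) = b(1) = 1, b(n) = 2ε₁·b(n-1) + 1, a(n) = (1-ε₂)·a(n-1) + ε₁·b(n-1) + 1 for n ≥ 2, with 0 ≤ ε₁ ≤ 3/10 and 0 ≤ ε₂ ≤ 1. Then there exists a constant C such that a(n) ≤ C·n for all n ≥ 1, i.e., the expected number of explored nodes is O(L) in the number of integer variables L. -/
theorem stmt_7 (ε₁ ε₂ : ℝ) (a b : ℕ → ℝ)
    (hε₁0 : 0 ≤ ε₁) (hε₁h : ε₁ ≤ 3/10) (hε₂0 : 0 ≤ ε₂) (hε₂1 : ε₂ ≤ 1)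
    (ha1 : a 1 = 1) (hb1 : b 1 = 1)
    (hbrec : ∀ n : ℕ, 2 ≤ n → b n = 2 * ε₁ * b (n - 1) + 1)
    (harec : ∀ n : ℕ, 2 ≤ n → a n = (1 - ε₂) * a (n - 1) + ε₁ * b (n - 1) + 1) :
    ∃ C : ℝ, ∀ n : ℕ, 1 ≤ n → a n ≤ C * n := by
  have hb : ∀ n : ℕ, 1 ≤ n → 0 ≤ b n ∧ b n ≤ 5/2 := by
    intro n hn
    induction n, hn using Nat.le_induction with
    | base => rw [hb1]; norm_num
    | succ n hn ih =>
      have h2 : 2 ≤ n + 1 := by omega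
      have := hbrec (n + 1) h2
      simp only [Nat.add_sub_cancel] at this
      constructor
      · nlinarith [ih.1, ih.2]
      · nlinarith [ih.1, ih.2]
  have ha : ∀ n : ℕ, 1 ≤ n → 0 ≤ a n ∧ a n ≤ 2 * n := by
    intro n hn
    induction n, hn using Nat.le_induction with
    | base => rw [ha1]; norm_num
    | succ n hn ih =>
      have h2 : 2 ≤ n + 1 := by omega
      have hrec := harec (n + 1) h2
      simp only [Nat.add_sub_cancel] at hrec
      obtain ⟨hb0, hb5⟩ := hb n hn
      have hn1 : (1 : ℝ) ≤ n := by exact_mod_cast hn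
      push_cast
      constructor
      · nlinarith [ih.1, ih.2]
      · nlinarith [ih.1, ih.2]
  exact ⟨2, fun n hn => (ha n hn).2⟩
end

section
/- Let c, d satisfy c(1) = d(1) = 1, d(n) = 2ε₁·d(n-1), c(n) = (1-ε₂)·c(n-1) + ε₁·d(n-1) for n ≥ 2, with 0 ≤ ε₁ < 1/2 and 0 ≤ ε₂ ≤ 1. Then for all n ≥ 2, c(n) ≤ 1 + ε₁·(1 - (2ε₁)^{n-1})/(1 - 2ε₁). -/
/-!
Solving the recursion for `d` gives `d n = (2ε₁)^(n-1)`. Since `0 ≤ 1 - ε₂ ≤ 1`, every `c n` is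
nonnegative, so `c n ≤ c (n-1) + ε₁ (2ε₁)^(n-2)`. Telescoping from `c 1 = 1` bounds `c n` by
`1 + ε₁` times a geometric sum with ratio `2ε₁ < 1`, which is the claimed closed form.
-/

open Finset

theorem eq_pow_pred_of_eq_mul_pred {M : Type*} [Monoid M] {r : M} {d : ℕ → M} (h1 : d 1 = 1)
    (h : ∀ n, 2 ≤ n → d n = r * d (n - 1)) : ∀ n, 1 ≤ n → d n = r ^ (n - 1) := by
  intro n hn
  induction n, hn using Nat.le_induction with
  | base => simpa using h1
  | succ m hm ih =>
    rw [h (m + 1) (by omega), Nat.add_sub_cancel, ih, ← pow_succ', Nat.sub_add_cancel hm]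

theorem nonneg_of_mul_pred_le {α : Type*} [Semiring α] [PartialOrder α] [IsOrderedRing α]
    {a : α} {c : ℕ → α} (ha : 0 ≤ a) (h1 : 0 ≤ c 1) (h : ∀ n, 2 ≤ n → a * c (n - 1) ≤ c n) :
    ∀ n, 1 ≤ n → 0 ≤ c n := by
  intro n hn
  induction n, hn using Nat.le_induction with
  | base => exact h1
  | succ m _ ih => exact (mul_nonneg ha ih).trans (h (m + 1) (by omega))

theorem le_add_sum_of_le_pred_add {α : Type*} [AddCommMonoid α] [PartialOrder α]
    [IsOrderedAddMonoid α] {c e : ℕ → α} (h : ∀ n, 2 ≤ n → c n ≤ c (n - 1) + e (n - 1)) :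
    ∀ n, 1 ≤ n → c n ≤ c 1 + ∑ k ∈ range (n - 1), e (k + 1) := by
  intro n hn
  induction n, hn using Nat.le_induction with
  | base => simp
  | succ m hm ih =>
    calc c (m + 1) ≤ c m + e m := h (m + 1) (by omega)
      _ ≤ c 1 + ∑ k ∈ range (m - 1), e (k + 1) + e (m - 1 + 1) := by
        rw [Nat.sub_add_cancel hm]; exact add_le_add_left ih _
      _ = c 1 + ∑ k ∈ range (m + 1 - 1), e (k + 1) := by
        rw [Nat.add_sub_cancel, ← Nat.sub_add_cancel hm, sum_range_succ, add_assoc,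
          Nat.add_sub_cancel]

theorem stmt_9 (ε₁ ε₂ : ℝ) (c d : ℕ → ℝ)
    (hε₁0 : 0 ≤ ε₁) (hε₁h : ε₁ < 1/2) (hε₂0 : 0 ≤ ε₂) (hε₂1 : ε₂ ≤ 1)
    (hc1 : c 1 = 1) (hd1 : d 1 = 1)
    (hdrec : ∀ n : ℕ, 2 ≤ n → d n = 2 * ε₁ * d (n - 1))
    (hcrec : ∀ n : ℕ, 2 ≤ n → c n = (1 - ε₂) * c (n - 1) + ε₁ * d (n - 1)) :
    ∀ n : ℕ, 2 ≤ n → c n ≤ 1 + ε₁ * (1 - (2 * ε₁) ^ (n - 1)) / (1 - 2 * ε₁) := by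
  intro n hn
  have hd := eq_pow_pred_of_eq_mul_pred hd1 hdrec
  have hd_succ : ∀ k, d (k + 1) = (2 * ε₁) ^ k := fun k => hd (k + 1) k.succ_pos
  have hd_nonneg : ∀ n, 2 ≤ n → 0 ≤ ε₁ * d (n - 1) := fun n hn => by
    rw [hd (n - 1) (by omega)]; positivity
  have hc_nonneg := nonneg_of_mul_pred_le (sub_nonneg.2 hε₂1) (hc1 ▸ zero_le_one)
    fun n hn => by linarith [hcrec n hn, hd_nonneg n hn]
  have hc_step : ∀ n, 2 ≤ n → c n ≤ c (n - 1) + ε₁ * d (n - 1) := fun n hn => by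
    linarith [hcrec n hn, mul_nonneg hε₂0 (hc_nonneg (n - 1) (by omega))]
  calc c n ≤ c 1 + ∑ k ∈ range (n - 1), ε₁ * d (k + 1) :=
        le_add_sum_of_le_pred_add (e := fun k => ε₁ * d k) hc_step n (by omega)
    _ = 1 + ε₁ * ∑ k ∈ range (n - 1), (2 * ε₁) ^ k := by
        simp only [hc1, mul_sum, hd_succ]
    _ = 1 + ε₁ * (1 - (2 * ε₁) ^ (n - 1)) / (1 - 2 * ε₁) := by
        rw [eq_div_of_mul_eq (by linarith) (geom_sum_mul_neg (2 * ε₁) (n - 1)), mul_div_assoc]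
end

section
/- Let c, d satisfy c(1) = d(1) = 1, d(n) = 2ε₁·d(n-1), c(n) = (1-ε₂)·c(n-1) + ε₁·d(n-1) for n ≥ 2, with 0 ≤ ε₁ ≤ 1/2 and 0 ≤ ε₂ ≤ 1. Then c(L+1) ≤ 1 + ε₁·L for all L ≥ 0; i.e., the expected number of relaxed convex problems solved is at most 1 + ε₁·L = O(L). -/
theorem stmt_10 (ε₁ ε₂ : ℝ) (c d : ℕ → ℝ)
    (hε₁0 : 0 ≤ ε₁) (hε₁h : ε₁ ≤ 1/2) (hε₂0 : 0 ≤ ε₂) (hε₂1 : ε₂ ≤ 1)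
    (hc1 : c 1 = 1) (hd1 : d 1 = 1)
    (hdrec : ∀ n : ℕ, 2 ≤ n → d n = 2 * ε₁ * d (n - 1))
    (hcrec : ∀ n : ℕ, 2 ≤ n → c n = (1 - ε₂) * c (n - 1) + ε₁ * d (n - 1)) :
    ∀ L : ℕ, c (L + 1) ≤ 1 + ε₁ * L := by
  have hd : ∀ n : ℕ, 0 ≤ d (n + 1) ∧ d (n + 1) ≤ 1 := by
    intro n
    induction n with
    | zero => simp [hd1]
    | succ k ih =>
      have h := hdrec (k + 2) (by omega)
      simp only [show k + 2 - 1 = k + 1 from rfl] at h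
      rw [h]
      exact ⟨mul_nonneg (by linarith) ih.1, by nlinarith [ih.1, ih.2]⟩
  have hc0 : ∀ n : ℕ, 0 ≤ c (n + 1) := by
    intro n
    induction n with
    | zero => simp [hc1]
    | succ k ih =>
      have h := hcrec (k + 2) (by omega)
      simp only [show k + 2 - 1 = k + 1 from rfl] at h
      rw [h]
      have := (hd k).1
      have h2 : 0 ≤ 1 - ε₂ := by linarith
      positivity
  intro L
  induction L with
  | zero => simp [hc1]
  | succ k ih =>
    have h := hcrec (k + 2) (by omega)
    simp only [show k + 2 - 1 = k + 1 from rfl] at h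
    have hdk := hd k
    have hck := hc0 k
    rw [h]
    push_cast
    nlinarith [hdk.1, hdk.2, mul_nonneg hε₁0 (Nat.cast_nonneg k : (0:ℝ) ≤ k)]
end

section
/- Let c, d satisfy c(1) = d(1) = 1, d(n) = 2ε₁·d(n-1), c(n) = (1-ε₂)·c(n-1) + ε₁·d(n-1) for n ≥ 2, with 0 ≤ ε₁ ≤ 1/3 and 0 ≤ ε₂ ≤ 1. Then c(n) ≤ 3 for all n ≥ 1; i.e., the expected number of relaxed convex problems solved is O(1). -/
theorem stmt_11 (ε₁ ε₂ : ℝ) (c d : ℕ → ℝ)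
    (hε₁0 : 0 ≤ ε₁) (hε₁h : ε₁ ≤ 1/3) (hε₂0 : 0 ≤ ε₂) (hε₂1 : ε₂ ≤ 1)
    (hc1 : c 1 = 1) (hd1 : d 1 = 1)
    (hdrec : ∀ n : ℕ, 2 ≤ n → d n = 2 * ε₁ * d (n - 1))
    (hcrec : ∀ n : ℕ, 2 ≤ n → c n = (1 - ε₂) * c (n - 1) + ε₁ * d (n - 1)) :
    ∀ n : ℕ, 1 ≤ n → c n ≤ 3 := by
  have key : ∀ n : ℕ, 1 ≤ n → 0 ≤ d n ∧ d n ≤ 1 ∧ c n ≤ 3 - 3 * ε₁ * d n := by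
    intro n hn
    induction n, hn using Nat.le_induction with
    | base =>
      refine ⟨by rw [hd1]; norm_num, by rw [hd1], ?_⟩
      rw [hc1, hd1]; linarith
    | succ n hn ih =>
      obtain ⟨hd0, hd1', hc⟩ := ih
      have h2 : 2 ≤ n + 1 := by omega
      have hds : d (n + 1) = 2 * ε₁ * d n := by
        have := hdrec (n + 1) h2; simpa using this
      have hcs : c (n + 1) = (1 - ε₂) * c n + ε₁ * d n := by
        have := hcrec (n + 1) h2; simpa using this
      refine ⟨by rw [hds]; positivity, ?_, ?_⟩
      · rw [hds]; nlinarith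
      · rw [hcs, hds]
        have hed : ε₁ * d n ≤ 1/3 := by nlinarith
        nlinarith [mul_nonneg (sub_nonneg.2 hε₂1) (sub_nonneg.2 hc),
          mul_nonneg hε₂0 (by linarith : (0:ℝ) ≤ 1 - 3 * (ε₁ * d n)),
          mul_nonneg (mul_nonneg hε₁0 hd0) (by linarith : (0:ℝ) ≤ 1 - 3 * ε₁)]
  intro n hn
  obtain ⟨hd0, _, hc⟩ := key n hn
  nlinarith [mul_nonneg hε₁0 hd0]
end
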